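/- Fix λ > 0 and θ ∈ ℝ. Define M₁ = diag(λ^{1/2}, λ^{-1/2}), M₂ = M₁^{-1} (M₁ U_θ M₁² U_θᵀ M₁)^{1/2} M₁^{-1}, and M₃ = (U_θ M₁² U_θᵀ)^{-1/2}. Then M₁, M₂, M₃ are symmetric positive definite 2×2 matrices and the product M₃ M₂ M₁ is an orthogonal matrix with determinant 1 (hence a rotation matrix). -/

import Mathlib

open Matrix
open scoped Classical

/-- The 2×2 rotation matrix by angle `θ`. -/
noncomputable def rotMat (θ : ℝ) : Matrix (Fin 2) (Fin 2) ℝ :=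
  !![Real.cos θ, Real.sin θ; -Real.sin θ, Real.cos θ]

/-- The positive semidefinite square root of a matrix, extended by `0` to
matrices that are not positive semidefinite.  For a positive definite matrix
`S`, `psqrt S` is the unique positive definite square root `S^{1/2}` of `S`. -/
noncomputable def psqrt {n : ℕ} (S : Matrix (Fin n) (Fin n) ℝ) :
    Matrix (Fin n) (Fin n) ℝ :=
  if h : S.PosSemidef then
    (h.1.eigenvectorUnitary : Matrix (Fin n) (Fin n) ℝ) *
      diagonal (Real.sqrt ∘ h.1.eigenvalues) *
      (star h.1.eigenvectorUnitary : Matrix (Fin n) (Fin n) ℝ)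
  else 0

/-! With `A = M₁` and `B = U_θ A² U_θᵀ`, we have `M₂ = A⁻¹ (A B A)^{1/2} A⁻¹` and `M₃ = B^{-1/2}`, so
`P = M₃ M₂ M₁ = B^{-1/2} A⁻¹ (A B A)^{1/2}` and
`Pᵀ P = (A B A)^{1/2} A⁻¹ B⁻¹ A⁻¹ (A B A)^{1/2} = (A B A)^{1/2} (A B A)⁻¹ (A B A)^{1/2} = 1`.
Every factor is a congruence of a positive definite matrix by an invertible one, hence positive
definite, so `det P > 0`; together with `(det P)² = 1` this gives `det P = 1`. -/

open scoped MatrixOrder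

namespace Matrix

section Orthogonality

variable {ι R : Type*} [Fintype ι] [DecidableEq ι] [CommRing R]

theorem transpose_mul_self_eq_one_of_mul_self_eq {A X Y : Matrix ι ι R}
    (hA : A.IsSymm) (hX : X.IsSymm) (hY : Y.IsSymm) (hXu : IsUnit X)
    (hXY : X * X = A * (Y * Y) * A) :
    (Y⁻¹ * A⁻¹ * X)ᵀ * (Y⁻¹ * A⁻¹ * X) = 1 := by
  have hT : (Y⁻¹ * A⁻¹ * X)ᵀ = X * A⁻¹ * Y⁻¹ := by
    rw [transpose_mul, transpose_mul, transpose_nonsing_inv, transpose_nonsing_inv, hA.eq, hX.eq,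
      hY.eq, Matrix.mul_assoc]
  have hdet : IsUnit X.det := (isUnit_iff_isUnit_det X).mp hXu
  calc (Y⁻¹ * A⁻¹ * X)ᵀ * (Y⁻¹ * A⁻¹ * X) = X * (A * (Y * Y) * A)⁻¹ * X := by
        rw [hT]
        simp only [Matrix.mul_inv_rev, Matrix.mul_assoc]
    _ = X * X⁻¹ * (X⁻¹ * X) := by
        rw [← hXY, Matrix.mul_inv_rev]
        simp only [Matrix.mul_assoc]
    _ = 1 := by rw [mul_nonsing_inv X hdet, nonsing_inv_mul X hdet, Matrix.mul_one]

theorem det_eq_one_of_transpose_mul_self_eq_one [LinearOrder R] [IsStrictOrderedRing R]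
    {P : Matrix ι ι R} (hP : Pᵀ * P = 1) (hdet : 0 < P.det) : P.det = 1 := by
  have h : P.det * P.det = 1 := by simpa using congrArg det hP
  nlinarith

end Orthogonality

theorem PosDef.isSymm {ι R : Type*} [Fintype ι] [Ring R] [PartialOrder R] [StarRing R]
    [TrivialStar R] {A : Matrix ι ι R} (hA : A.PosDef) : A.IsSymm :=
  isHermitian_iff_isSymm.mp hA.isHermitian

section RealPosDef

variable {ι : Type*} [Fintype ι] [DecidableEq ι] {A U : Matrix ι ι ℝ}

theorem PosDef.mul_mul_transpose_of_isUnit (hA : A.PosDef) (hU : IsUnit U) :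
    (U * A * Uᵀ).PosDef := by
  simpa [star_eq_conjTranspose] using hU.posDef_star_right_conjugate_iff.mpr hA

theorem PosDef.sq (hA : A.PosDef) : (A ^ 2).PosDef := by
  simpa [hA.isSymm.eq, ← pow_two] using PosDef.one.mul_mul_transpose_of_isUnit hA.isUnit

end RealPosDef

theorem posDef_fin_two_diag {a b : ℝ} (ha : 0 < a) (hb : 0 < b) : !![a, 0; 0, b].PosDef := by
  rw [show !![a, 0; 0, b] = diagonal ![a, b] from (diagonal_fin_two ![a, b]).symm]
  exact .diagonal fun i => by fin_cases i <;> assumption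

section Psqrt

variable {n : ℕ} {S : Matrix (Fin n) (Fin n) ℝ}

theorem psqrt_eq_sqrt (hS : S.PosSemidef) : psqrt S = CFC.sqrt S := by
  rw [psqrt, dif_pos hS, CFC.sqrt_eq_cfc, cfc_nnreal_eq_real _ S hS.nonneg, hS.1.cfc_eq,
    IsHermitian.cfc, Unitary.conjStarAlgAut_apply]
  congr 3
  funext i
  simp [hS.eigenvalues_nonneg i]

theorem psqrt_mul_self (hS : S.PosSemidef) : psqrt S * psqrt S = S := by
  rw [psqrt_eq_sqrt hS, CFC.sqrt_mul_sqrt_self S hS.nonneg]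

theorem PosDef.psqrt (hS : S.PosDef) : (psqrt S).PosDef := by
  rw [psqrt_eq_sqrt hS.posSemidef, (CFC.sqrt_nonneg S).posSemidef.posDef_iff_isUnit,
    CFC.isUnit_sqrt_iff_isStrictlyPositive]
  exact hS.isStrictlyPositive

end Psqrt

end Matrix

theorem rotMat_det (θ : ℝ) : (rotMat θ).det = 1 := by
  simp [rotMat, det_fin_two_of, ← sq, Real.cos_sq_add_sin_sq]

/-- Fix `λ > 0` and `θ ∈ ℝ`.  With `M₁ = diag(λ^{1/2}, λ^{-1/2})`,
`M₂ = M₁⁻¹ (M₁ U_θ M₁² U_θᵀ M₁)^{1/2} M₁⁻¹` and `M₃ = (U_θ M₁² U_θᵀ)^{-1/2}`,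
the matrices `M₁, M₂, M₃` are symmetric positive definite and
`M₃ M₂ M₁` is an orthogonal matrix with determinant `1`. -/
theorem three_factor_scheme_is_rotation (l θ : ℝ) (hl : 0 < l) :
    ∀ M₁ M₂ M₃ : Matrix (Fin 2) (Fin 2) ℝ,
      M₁ = !![Real.sqrt l, 0; 0, (Real.sqrt l)⁻¹] →
      M₂ = M₁⁻¹ * psqrt (M₁ * rotMat θ * M₁ ^ 2 * (rotMat θ)ᵀ * M₁) * M₁⁻¹ →
      M₃ = (psqrt (rotMat θ * M₁ ^ 2 * (rotMat θ)ᵀ))⁻¹ →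
      M₁.PosDef ∧ M₂.PosDef ∧ M₃.PosDef ∧
      (M₃ * M₂ * M₁)ᵀ * (M₃ * M₂ * M₁) = 1 ∧
      (M₃ * M₂ * M₁) * (M₃ * M₂ * M₁)ᵀ = 1 ∧
      (M₃ * M₂ * M₁).det = 1 := by
  intro M₁ M₂ M₃ h₁ h₂ h₃
  set U := rotMat θ
  have hsqrt : 0 < Real.sqrt l := Real.sqrt_pos.mpr hl
  have hM₁ : M₁.PosDef := h₁ ▸ posDef_fin_two_diag hsqrt (inv_pos.mpr hsqrt)
  have hU : IsUnit U := (isUnit_iff_isUnit_det U).mpr (by simp [U, rotMat_det])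
  have hB : (U * M₁ ^ 2 * Uᵀ).PosDef := hM₁.sq.mul_mul_transpose_of_isUnit hU
  have hS : (M₁ * U * M₁ ^ 2 * Uᵀ * M₁).PosDef := by
    simpa only [hM₁.isSymm.eq, Matrix.mul_assoc] using hB.mul_mul_transpose_of_isUnit hM₁.isUnit
  set X := psqrt (M₁ * U * M₁ ^ 2 * Uᵀ * M₁)
  set Y := psqrt (U * M₁ ^ 2 * Uᵀ)
  have hM₂ : M₂.PosDef := by
    simpa only [h₂, transpose_nonsing_inv, hM₁.isSymm.eq] using
      hS.psqrt.mul_mul_transpose_of_isUnit hM₁.inv.isUnit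
  have hM₃ : M₃.PosDef := h₃ ▸ hB.psqrt.inv
  have hP : M₃ * M₂ * M₁ = Y⁻¹ * M₁⁻¹ * X := by
    simp only [h₂, h₃, Matrix.mul_assoc, nonsing_inv_mul _ hM₁.det_pos.ne'.isUnit, Matrix.mul_one]
  have hXY : X * X = M₁ * (Y * Y) * M₁ := by
    rw [psqrt_mul_self hS.posSemidef, psqrt_mul_self hB.posSemidef]
    simp only [Matrix.mul_assoc]
  have hPP : (M₃ * M₂ * M₁)ᵀ * (M₃ * M₂ * M₁) = 1 := hP ▸
    transpose_mul_self_eq_one_of_mul_self_eq hM₁.isSymm hS.psqrt.isSymm hB.psqrt.isSymm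
      hS.psqrt.isUnit hXY
  have hdet : 0 < (M₃ * M₂ * M₁).det := by
    rw [det_mul, det_mul]
    exact mul_pos (mul_pos hM₃.det_pos hM₂.det_pos) hM₁.det_pos
  exact ⟨hM₁, hM₂, hM₃, hPP, mul_eq_one_comm.mp hPP,
    det_eq_one_of_transpose_mul_self_eq_one hPP hdet⟩
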